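/- Let H > 0, λ = 1/(2H) and K₁ = max(8H,1). Let ξ_α, ξ_β, η_α, η_β ∈ ℝ³ satisfy |ξ_α − ξ_β| ≥ λ, |η_α| ≤ √(2H) and |η_β| ≤ √(2H). For γ ∈ {α,β} define h_γ(X,V) = |V−η_γ|²/2 + 1/|X−ξ_γ| + K₁. Then there exists a constant C₄ depending only on H such that for every X ∈ ℝ³ with |X−ξ_α| ≤ 7λ/48 and every V ∈ ℝ³, √(h_β(X,V)) ≤ √(h_α(X,V)) + C₄. -/
import Mathlib


noncomputable section

open MeasureTheory Set

/-- Physical/phase half-space: three-dimensional Euclidean space. -/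
abbrev E3 : Type := EuclideanSpace ℝ (Fin 3)

/-- The Coulomb kernel `x ↦ x / |x|³`. -/
def kernel (x : E3) : E3 := (‖x‖ ^ 3)⁻¹ • x

lemma sqrt_add_le_aux (x y : ℝ) (hx : 0 ≤ x) (hy : 0 ≤ y) :
    Real.sqrt (x + y) ≤ Real.sqrt x + Real.sqrt y := by
  calc Real.sqrt (x + y) ≤ Real.sqrt ((Real.sqrt x + Real.sqrt y) ^ 2) := by
        apply Real.sqrt_le_sqrt
        nlinarith [Real.sq_sqrt hx, Real.sq_sqrt hy, Real.sqrt_nonneg x, Real.sqrt_nonneg y]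
    _ = Real.sqrt x + Real.sqrt y := Real.sqrt_sq (by positivity)

/-- Lemma 4.4: comparison of the energies relative to two different
charges, for points close to the `α`-th charge. -/
theorem statement16 (H : ℝ) (hH : 0 < H) :
    ∃ C₄ : ℝ, ∀ ξα ξβ ηα ηβ : E3,
      1 / (2 * H) ≤ ‖ξα - ξβ‖ →
      ‖ηα‖ ≤ Real.sqrt (2 * H) → ‖ηβ‖ ≤ Real.sqrt (2 * H) →
      ∀ X V : E3, ‖X - ξα‖ ≤ 7 * (1 / (2 * H)) / 48 →
        Real.sqrt (‖V - ηβ‖ ^ 2 / 2 + ‖X - ξβ‖⁻¹ + max (8 * H) 1) ≤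
          Real.sqrt (‖V - ηα‖ ^ 2 / 2 + ‖X - ξα‖⁻¹ + max (8 * H) 1) + C₄ := by
  refine ⟨2 * Real.sqrt (2 * H) + Real.sqrt (96 * H / 41 + max (8 * H) 1), ?_⟩
  intro ξα ξβ ηα ηβ hdist hηα hηβ X V hX
  set K₁ : ℝ := max (8 * H) 1 with hK₁
  have hK₁pos : (0:ℝ) < K₁ := lt_of_lt_of_le one_pos (le_max_right _ _)
  have hlam : (0:ℝ) < 1 / (2 * H) := by positivity
  -- distance to ξβ is bounded below
  have hXβlb : 41 / 48 * (1 / (2 * H)) ≤ ‖X - ξβ‖ := by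
    have h1 : ‖ξα - ξβ‖ ≤ ‖ξα - X‖ + ‖X - ξβ‖ := by
      calc ‖ξα - ξβ‖ = ‖(ξα - X) + (X - ξβ)‖ := by rw [sub_add_sub_cancel]
        _ ≤ ‖ξα - X‖ + ‖X - ξβ‖ := norm_add_le _ _
    have h2 : ‖ξα - X‖ = ‖X - ξα‖ := norm_sub_rev _ _
    linarith
  have hXβpos : (0:ℝ) < ‖X - ξβ‖ := lt_of_lt_of_le (by positivity) hXβlb
  have hinv : ‖X - ξβ‖⁻¹ ≤ 96 * H / 41 := by
    have h3 : ‖X - ξβ‖⁻¹ ≤ (41 / 48 * (1 / (2 * H)))⁻¹ :=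
      inv_anti₀ (by positivity) hXβlb
    have h4 : (41 / 48 * (1 / (2 * H)))⁻¹ = 96 * H / 41 := by
      field_simp; ring
    linarith [h3, h4.le]
  -- velocity triangle
  have hVβ : ‖V - ηβ‖ ≤ ‖V - ηα‖ + 2 * Real.sqrt (2 * H) := by
    have h1 : ‖V - ηβ‖ ≤ ‖V - ηα‖ + ‖ηα - ηβ‖ := by
      calc ‖V - ηβ‖ = ‖(V - ηα) + (ηα - ηβ)‖ := by rw [sub_add_sub_cancel]
        _ ≤ ‖V - ηα‖ + ‖ηα - ηβ‖ := norm_add_le _ _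
    have h2 : ‖ηα - ηβ‖ ≤ Real.sqrt (2 * H) + Real.sqrt (2 * H) :=
      le_trans (norm_sub_le _ _) (add_le_add hηα hηβ)
    linarith
  have hs2 : (1:ℝ) ≤ Real.sqrt 2 := by
    rw [show (1:ℝ) = Real.sqrt 1 from (Real.sqrt_one).symm]
    exact Real.sqrt_le_sqrt (by norm_num)
  have hs2pos : (0:ℝ) < Real.sqrt 2 := lt_of_lt_of_le one_pos hs2
  have sqrt_half : ∀ t : ℝ, 0 ≤ t → Real.sqrt (t ^ 2 / 2) = t / Real.sqrt 2 := by
    intro t ht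
    rw [Real.sqrt_div (by positivity), Real.sqrt_sq ht]
  -- main chain
  have step1 : Real.sqrt (‖V - ηβ‖ ^ 2 / 2 + ‖X - ξβ‖⁻¹ + K₁) ≤
      Real.sqrt (‖V - ηβ‖ ^ 2 / 2) + Real.sqrt (‖X - ξβ‖⁻¹ + K₁) := by
    rw [add_assoc]
    exact sqrt_add_le_aux _ _ (by positivity) (by positivity)
  have step2 : Real.sqrt (‖V - ηβ‖ ^ 2 / 2) ≤
      Real.sqrt (‖V - ηα‖ ^ 2 / 2) + 2 * Real.sqrt (2 * H) := by
    rw [sqrt_half _ (norm_nonneg _), sqrt_half _ (norm_nonneg _)]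
    have hs2H : (0:ℝ) ≤ Real.sqrt (2 * H) := Real.sqrt_nonneg _
    have h1 : ‖V - ηβ‖ / Real.sqrt 2 ≤ (‖V - ηα‖ + 2 * Real.sqrt (2 * H)) / Real.sqrt 2 := by
      gcongr
    have h2 : (‖V - ηα‖ + 2 * Real.sqrt (2 * H)) / Real.sqrt 2 =
        ‖V - ηα‖ / Real.sqrt 2 + (2 * Real.sqrt (2 * H)) / Real.sqrt 2 := add_div _ _ _
    have h3 : (2 * Real.sqrt (2 * H)) / Real.sqrt 2 ≤ 2 * Real.sqrt (2 * H) :=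
      div_le_self (by positivity) hs2
    linarith
  have step3 : Real.sqrt (‖X - ξβ‖⁻¹ + K₁) ≤ Real.sqrt (96 * H / 41 + K₁) :=
    Real.sqrt_le_sqrt (by linarith)
  have step4 : Real.sqrt (‖V - ηα‖ ^ 2 / 2) ≤
      Real.sqrt (‖V - ηα‖ ^ 2 / 2 + ‖X - ξα‖⁻¹ + K₁) := by
    apply Real.sqrt_le_sqrt
    have : (0:ℝ) ≤ ‖X - ξα‖⁻¹ := by positivity
    linarith
  linarith
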